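/- arXiv:1212.6656 — 2 statements merged into one kernel-verified Lean document; each statement's English description precedes it below -/
import Mathlib

section
/- Let λ = (a_1,…,a_n) ∈ ℂ^n satisfy a_i ≻ a_{i+1} for all 1 ≤ i ≤ n−1, let 1 ≤ k ≤ n−1, and assume in addition that a_j − a_{j+1} ∈ ℤ_{>0} for all 1 ≤ j ≤ k−1 (no two consecutive zeros among a_1,…,a_k). Set (b_1,…,b_n) := s_1 s_2 ⋯ s_k * λ. Then b_i − b_{i+1} ∈ ℤ_{>0} for 2 ≤ i ≤ k, and b_i ≻ b_{i+1} for k+1 ≤ i ≤ n−1; in particular b_2 ≻ b_3 ≻ ⋯ ≻ b_n. -/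
open Finset

/-- The 1-based `i`-th coordinate of a weight `λ ∈ ℂ^n` (0 if out of range). -/
def coord {n : ℕ} (lam : Fin n → ℂ) (i : ℕ) : ℂ :=
  if h : 1 ≤ i ∧ i ≤ n then lam ⟨i - 1, by omega⟩ else 0

/-- The star action of the generator `s_i` (1 ≤ i ≤ n-1) on weights:
swap coordinates `i` and `i+1` if their sum is nonzero, otherwise replace
`(λ_i, λ_{i+1})` by `(λ_{i+1} - 1, λ_i + 1)`. -/
noncomputable def sStar {n : ℕ} (i : ℕ) (lam : Fin n → ℂ) : Fin n → ℂ := fun j =>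
  if (j : ℕ) + 1 = i then
    (if coord lam i + coord lam (i + 1) = 0 then coord lam (i + 1) - 1 else coord lam (i + 1))
  else if (j : ℕ) = i then
    (if coord lam i + coord lam (i + 1) = 0 then coord lam i + 1 else coord lam i)
  else lam j

/-- The partial order on weights: `μ ≤ ν` iff each partial sum
`Σ_{j=1}^i (ν_j - μ_j)` (1 ≤ i ≤ n-1) is a nonnegative integer and the
total sum `Σ_{j=1}^n (ν_j - μ_j)` is zero. -/
def wle {n : ℕ} (mu nu : Fin n → ℂ) : Prop :=
  (∀ i : ℕ, 1 ≤ i → i ≤ n - 1 →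
    ∃ m : ℕ, ∑ j ∈ Finset.Icc 1 i, (coord nu j - coord mu j) = (m : ℂ)) ∧
  ∑ j ∈ Finset.Icc 1 n, (coord nu j - coord mu j) = 0

/-- Strict inequality of weights. -/
def wlt {n : ℕ} (mu nu : Fin n → ℂ) : Prop := wle mu nu ∧ mu ≠ nu

/-- `a ≻ b` iff `a - b ∈ ℤ_{>0}` or `a = b = 0`. -/
def csucc (a b : ℂ) : Prop := (∃ m : ℤ, 0 < m ∧ a - b = (m : ℂ)) ∨ (a = 0 ∧ b = 0)

/-- `starDesc j k λ = s_j s_{j+1} ⋯ s_k * λ` (apply `s_k` first, `s_j` last);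
equals `λ` when `j > k`. -/
noncomputable def starDesc {n : ℕ} (j k : ℕ) (lam : Fin n → ℂ) : Fin n → ℂ :=
  (List.range' j (k + 1 - j)).foldr (fun i mu => sStar i mu) lam

/-- `starAsc j k λ = s_k s_{k-1} ⋯ s_j * λ` (apply `s_j` first, `s_k` last);
equals `λ` when `j > k`. -/
noncomputable def starAsc {n : ℕ} (j k : ℕ) (lam : Fin n → ℂ) : Fin n → ℂ :=
  (List.range' j (k + 1 - j)).foldl (fun mu i => sStar i mu) lam

/-- The "carried" value: `cv lam k j` is the first coordinate of
`s_{k+1-j} ⋯ s_k * lam`. -/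
noncomputable def cv {n : ℕ} (lam : Fin n → ℂ) (k : ℕ) : ℕ → ℂ
  | 0 => coord lam (k + 1)
  | j + 1 => if coord lam (k - j) + cv lam k j = 0 then cv lam k j - 1 else cv lam k j

lemma coord_sStar {n : ℕ} (t : ℕ) (mu : Fin n → ℂ) (i : ℕ) (hi1 : 1 ≤ i) (hi2 : i ≤ n) :
    coord (sStar t mu) i =
      if i = t then
        (if coord mu t + coord mu (t + 1) = 0 then coord mu (t + 1) - 1 else coord mu (t + 1))
      else if i = t + 1 then
        (if coord mu t + coord mu (t + 1) = 0 then coord mu t + 1 else coord mu t)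
      else coord mu i := by
  have hin : 1 ≤ i ∧ i ≤ n := ⟨hi1, hi2⟩
  conv_lhs => rw [coord, dif_pos hin]
  show (if (i - 1) + 1 = t then _ else if (i - 1) = t then _ else mu ⟨i - 1, by omega⟩) = _
  by_cases h1 : i = t
  · rw [if_pos (by omega), if_pos h1]
  · rw [if_neg (by omega), if_neg h1]
    by_cases h2 : i = t + 1
    · rw [if_pos (by omega), if_pos h2]
    · rw [if_neg (by omega), if_neg h2, coord, dif_pos hin]

lemma starDesc_coord_aux {n : ℕ} (lam : Fin n → ℂ) (k : ℕ) (hk : k + 1 ≤ n) :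
    ∀ d t, 1 ≤ t → t + d = k + 1 → ∀ i, 1 ≤ i → i ≤ n →
      coord (starDesc t k lam) i =
        if i < t then coord lam i
        else if i = t then cv lam k (k + 1 - t)
        else if i ≤ k + 1 then
          coord lam (i - 1) + (if coord lam (i - 1) + cv lam k (k + 1 - i) = 0 then 1 else 0)
        else coord lam i := by
  intro d
  induction d with
  | zero =>
    intro t ht1 ht2 i hi1 hi2
    have htk : t = k + 1 := by omega
    subst htk
    have h0 : starDesc (k + 1) k lam = lam := by
      unfold starDesc
      rw [show k + 1 - (k + 1) = 0 from by omega]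
      rfl
    rw [h0]
    by_cases hA : i < k + 1
    · rw [if_pos hA]
    · by_cases hB : i = k + 1
      · rw [if_neg hA, if_pos hB, hB, show k + 1 - (k + 1) = 0 from by omega]
        rfl
      · rw [if_neg hA, if_neg hB, if_neg (by omega : ¬ i ≤ k + 1)]
  | succ d ih =>
    intro t ht1 ht2 i hi1 hi2
    have htk : t ≤ k := by omega
    have hfold : starDesc t k lam = sStar t (starDesc (t + 1) k lam) := by
      unfold starDesc
      rw [show k + 1 - t = (k - t) + 1 from by omega, List.range'_succ,
        show k + 1 - (t + 1) = k - t from by omega]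
      rfl
    have ih' := ih (t + 1) (by omega) (by omega)
    have hmt : coord (starDesc (t + 1) k lam) t = coord lam t := by
      rw [ih' t (by omega) (by omega), if_pos (by omega : t < t + 1)]
    have hmt1 : coord (starDesc (t + 1) k lam) (t + 1) = cv lam k d := by
      rw [ih' (t + 1) (by omega) (by omega), if_neg (by omega : ¬ t + 1 < t + 1), if_pos rfl,
        show k + 1 - (t + 1) = d from by omega]
    rw [hfold, coord_sStar t _ i hi1 hi2, hmt, hmt1]
    by_cases hA : i = t
    · subst hA
      rw [if_pos rfl, if_neg (by omega : ¬ i < i), if_pos rfl,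
        show k + 1 - i = d + 1 from by omega, cv, show k - d = i from by omega]
    · by_cases hB : i = t + 1
      · subst hB
        rw [if_neg hA, if_pos rfl, if_neg (by omega : ¬ t + 1 < t), if_neg hA,
          if_pos (by omega : t + 1 ≤ k + 1), show t + 1 - 1 = t from by omega,
          show k + 1 - (t + 1) = d from by omega]
        split_ifs <;> ring
      · rw [if_neg hA, if_neg hB, ih' i hi1 hi2]
        by_cases hC : i < t
        · rw [if_pos (show i < t + 1 by omega), if_pos hC]
        · rw [if_neg (show ¬ i < t + 1 by omega), if_neg hB, if_neg hC, if_neg hA]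

lemma cast_pos_ne_zero (m : ℤ) (hm : 0 < m) : (m : ℂ) ≠ 0 := by
  simpa using hm.ne'
theorem stmt12 (n : ℕ) (hn : 2 ≤ n) (lam : Fin n → ℂ) (k : ℕ)
    (hk1 : 1 ≤ k) (hk2 : k ≤ n - 1)
    (h1 : ∀ i, 1 ≤ i → i ≤ n - 1 → csucc (coord lam i) (coord lam (i + 1)))
    (h2 : ∀ j, 1 ≤ j → j ≤ k - 1 → ∃ m : ℤ, 0 < m ∧ coord lam j - coord lam (j + 1) = (m : ℂ)) :
    (∀ i, 2 ≤ i → i ≤ k →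
      ∃ m : ℤ, 0 < m ∧
        coord (starDesc 1 k lam) i - coord (starDesc 1 k lam) (i + 1) = (m : ℂ)) ∧
    (∀ i, k + 1 ≤ i → i ≤ n - 1 →
      csucc (coord (starDesc 1 k lam) i) (coord (starDesc 1 k lam) (i + 1))) ∧
    (∀ i, 2 ≤ i → i ≤ n - 1 →
      csucc (coord (starDesc 1 k lam) i) (coord (starDesc 1 k lam) (i + 1))) := by
  have hkn : k + 1 ≤ n := by omega
  have main := starDesc_coord_aux lam k hkn k 1 le_rfl (by omega)
  have key : ∀ i, 2 ≤ i → i ≤ k + 1 → coord (starDesc 1 k lam) i =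
      coord lam (i - 1) +
        (if coord lam (i - 1) + cv lam k (k + 1 - i) = 0 then 1 else 0) := by
    intro i hi1 hi2
    rw [main i (by omega) (by omega), if_neg (by omega), if_neg (by omega), if_pos hi2]
  have key2 : ∀ i, k + 2 ≤ i → i ≤ n → coord (starDesc 1 k lam) i = coord lam i := by
    intro i hi1 hi2
    rw [main i (by omega) hi2, if_neg (by omega), if_neg (by omega), if_neg (by omega)]
  have cvrec : ∀ i, 2 ≤ i → i ≤ k + 1 → cv lam k (k + 2 - i) =
      if coord lam (i - 1) + cv lam k (k + 1 - i) = 0 then cv lam k (k + 1 - i) - 1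
      else cv lam k (k + 1 - i) := by
    intro i hi1 hi2
    rw [show k + 2 - i = (k + 1 - i) + 1 from by omega, cv,
      show k - (k + 1 - i) = i - 1 from by omega]
  have part1 : ∀ i, 2 ≤ i → i ≤ k →
      ∃ m : ℤ, 0 < m ∧
        coord (starDesc 1 k lam) i - coord (starDesc 1 k lam) (i + 1) = (m : ℂ) := by
    intro i hi1 hi2
    obtain ⟨m, hm0, hm⟩ := h2 (i - 1) (by omega) (by omega)
    rw [show i - 1 + 1 = i from by omega] at hm
    rw [key i (by omega) (by omega), key (i + 1) (by omega) (by omega),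
      show i + 1 - 1 = i from by omega, show k + 1 - (i + 1) = k - i from by omega]
    have hrel : cv lam k (k + 1 - i) =
        if coord lam i + cv lam k (k - i) = 0 then cv lam k (k - i) - 1
        else cv lam k (k - i) := by
      have h := cvrec (i + 1) (by omega) (by omega)
      rw [show k + 2 - (i + 1) = k + 1 - i from by omega,
        show i + 1 - 1 = i from by omega,
        show k + 1 - (i + 1) = k - i from by omega] at h
      exact h
    by_cases hz : coord lam i + cv lam k (k - i) = 0
    · rw [if_pos hz]
      rw [if_pos hz] at hrel
      by_cases hz2 : coord lam (i - 1) + cv lam k (k + 1 - i) = 0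
      · rw [if_pos hz2]
        exact ⟨m, hm0, by linear_combination hm⟩
      · rw [if_neg hz2]
        have hm1 : m ≠ 1 := by
          intro h
          subst h
          apply hz2
          rw [hrel]
          push_cast at hm
          linear_combination hm + hz
        refine ⟨m - 1, by omega, ?_⟩
        push_cast
        linear_combination hm
    · rw [if_neg hz]
      rw [if_neg hz] at hrel
      by_cases hz2 : coord lam (i - 1) + cv lam k (k + 1 - i) = 0
      · rw [if_pos hz2]
        exact ⟨m + 1, by omega, by push_cast; linear_combination hm⟩
      · rw [if_neg hz2]
        exact ⟨m, hm0, by linear_combination hm⟩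
  have hee : cv lam k (k + 1 - (k + 1)) = coord lam (k + 1) := by
    rw [show k + 1 - (k + 1) = 0 from by omega]
    rfl
  have part2 : ∀ i, k + 1 ≤ i → i ≤ n - 1 →
      csucc (coord (starDesc 1 k lam) i) (coord (starDesc 1 k lam) (i + 1)) := by
    intro i hik hin
    by_cases hcase : i = k + 1
    · subst hcase
      rw [key (k + 1) (by omega) (by omega), key2 (k + 2) (by omega) (by omega),
        show k + 1 - 1 = k from by omega, hee]
      obtain h1k := h1 k (by omega) (by omega)
      obtain h1k1 := h1 (k + 1) (by omega) hin
      by_cases hz : coord lam k + coord lam (k + 1) = 0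
      · rw [if_pos hz]
        rcases h1k with ⟨m, hm0, hm⟩ | ⟨hk0, hk10⟩
        · have hne : coord lam (k + 1) ≠ 0 := by
            intro h
            exact cast_pos_ne_zero m hm0 (by linear_combination -hm + hz - 2 * h)
          rcases h1k1 with ⟨m', hm0', hm'⟩ | ⟨h0, _⟩
          · exact Or.inl ⟨m + m' + 1, by omega, by push_cast; linear_combination hm + hm'⟩
          · exact absurd h0 hne
        · rcases h1k1 with ⟨m', hm0', hm'⟩ | ⟨h0, h00⟩
          · exact Or.inl ⟨m' + 1, by omega, by push_cast; linear_combination hm' + hk0 - hk10⟩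
          · exact Or.inl ⟨1, by norm_num, by rw [hk0, h00]; push_cast; ring⟩
      · rw [if_neg hz]
        rcases h1k with ⟨m, hm0, hm⟩ | ⟨hk0, hk10⟩
        · rcases h1k1 with ⟨m', hm0', hm'⟩ | ⟨h0, h00⟩
          · exact Or.inl ⟨m + m', by omega, by push_cast; linear_combination hm + hm'⟩
          · exact Or.inl ⟨m, hm0, by linear_combination hm + h0 - h00⟩
        · exact absurd (by rw [hk0, hk10]; ring) hz
    · rw [key2 i (by omega) (by omega), key2 (i + 1) (by omega) (by omega)]
      exact h1 i (by omega) hin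
  refine ⟨part1, part2, fun i hi1 hi2 => ?_⟩
  by_cases h : i ≤ k
  · exact Or.inl (part1 i hi1 h)
  · exact part2 i (by omega) hi2
end

section
/- Let λ = (a_1,…,a_n) ∈ ℂ^n and 1 ≤ m ≤ n−1 be such that a_i ≻ a_{i+1} for all 1 ≤ i ≤ n−1 with i ≠ m, and either a_m = a_{m+1} ≠ 0, or a_m = −1/2 and a_{m+1} = 1/2 (so λ is a singular W̃-maximal weight with s_m * λ = λ). Then s_1 s_2 ⋯ s_m * λ = s_1 s_2 ⋯ s_{m−1} * λ, and setting (b_1,…,b_n) := s_1 ⋯ s_{m−1} * λ one has b_i ≻ b_{i+1} for all 2 ≤ i ≤ n−1. -/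
open Finset

/-!
Applying `s_{m-1}, …, s_1` in turn carries the entry `x = λ_m` leftwards to position `1`. At
`s_k` the pair `(λ_k, x)` is either swapped or, when `λ_k + x = 0`, replaced by `(x - 1, λ_k + 1)`.
The moving entry stays `λ_m` minus a natural number and never becomes `0`: a shift of `x = 1`
would make `(λ_k - λ_m) + (λ_m - x) = -2` a sum of two naturals. So `λ_k ≠ 0` at every shift, and an
entry `λ_{k+1} + 1` raised by a shift is swapped next to an unshifted `λ_k` only if
`λ_k - λ_{k+1} ≥ 2` (otherwise `λ_k` would have been shifted too); thus the chain `≻` behind the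
moving entry survives every step. Since `s_m` fixes `λ`, the first claim is immediate.
-/

lemma csucc.exists_nat_sub {a b : ℂ} (h : csucc a b) : ∃ s : ℕ, a - b = s := by
  rcases h with ⟨m, hm, he⟩ | ⟨ha, hb⟩
  · exact ⟨m.toNat, by rw [he]; norm_cast; omega⟩
  · exact ⟨0, by simp [ha, hb]⟩

lemma csucc.exists_pos_nat_sub {a b : ℂ} (h : csucc a b) (hb : b ≠ 0) :
    ∃ s : ℕ, 0 < s ∧ a - b = s := by
  rcases h with ⟨m, hm, he⟩ | ⟨-, hb'⟩
  · exact ⟨m.toNat, by omega, by rw [he]; norm_cast; omega⟩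
  · exact absurd hb' hb

lemma csucc_of_sub_eq_nat {a b : ℂ} {s : ℕ} (hs : 0 < s) (h : a - b = s) : csucc a b :=
  Or.inl ⟨s, by exact_mod_cast hs, by exact_mod_cast h⟩

lemma exists_nat_sub_of_csucc_chain (f : ℕ → ℂ) {a b : ℕ} (hab : a ≤ b)
    (h : ∀ i, a ≤ i → i < b → csucc (f i) (f (i + 1))) : ∃ s : ℕ, f a - f b = s := by
  induction b, hab using Nat.le_induction with
  | base => exact ⟨0, by simp⟩
  | succ b hab ih =>
    obtain ⟨s, hs⟩ := ih fun i hi hib => h i hi (by omega)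
    obtain ⟨t, ht⟩ := (h b hab (by omega)).exists_nat_sub
    exact ⟨s + t, by push_cast; linear_combination hs + ht⟩

/-- `s_i` moves `a` to the right past the moving entry `x`, next to `y`, which is `b` or, if the
previous step was a shift, `b + 1`. -/
lemma csucc_sStar_entry {a b x y : ℂ} (hab : csucc a b)
    (hy : y = b ∨ (y = b + 1 ∧ x + y = 0 ∧ b ≠ 0)) :
    csucc (if a + x = 0 then a + 1 else a) y := by
  split_ifs with hax
  · rcases hy with rfl | ⟨rfl, hxy, -⟩
    · obtain ⟨s, hs⟩ := hab.exists_nat_sub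
      exact csucc_of_sub_eq_nat (s := s + 1) (by omega) (by push_cast; linear_combination hs)
    · exact csucc_of_sub_eq_nat (s := 1) one_pos (by push_cast; linear_combination hax - hxy)
  · rcases hy with rfl | ⟨rfl, hxy, hb⟩
    · exact hab
    · obtain ⟨s, hs, hab'⟩ := hab.exists_pos_nat_sub hb
      have hs1 : s ≠ 1 := by
        rintro rfl
        exact hax (by push_cast at hab'; linear_combination hab' + hxy)
      exact csucc_of_sub_eq_nat (s := s - 1) (by omega)
        (by rw [Nat.cast_sub (by omega)]; push_cast; linear_combination hab')

section StarAction

variable {n : ℕ}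

lemma coord_of_mem (lam : Fin n → ℂ) {j : ℕ} (h1 : 1 ≤ j) (h2 : j ≤ n) :
    coord lam j = lam ⟨j - 1, by omega⟩ :=
  dif_pos ⟨h1, h2⟩

lemma eq_of_coord_eq {mu nu : Fin n → ℂ}
    (h : ∀ j, 1 ≤ j → j ≤ n → coord mu j = coord nu j) : mu = nu := by
  funext j
  have hj := h (j + 1) (by omega) (by omega)
  simpa [coord_of_mem _ (by omega : 1 ≤ (j : ℕ) + 1) (by omega : (j : ℕ) + 1 ≤ n)] using hj

lemma coord_sStar_of_ne (i : ℕ) (mu : Fin n → ℂ) {j : ℕ} (hj : 1 ≤ j) (hi : j ≠ i)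
    (hi' : j ≠ i + 1) : coord (sStar i mu) j = coord mu j := by
  unfold coord
  split_ifs with h
  · simp only [sStar, if_neg (show j - 1 + 1 ≠ i by omega), if_neg (show j - 1 ≠ i by omega)]
  · rfl

lemma coord_sStar_self (mu : Fin n → ℂ) {i : ℕ} (hi : 1 ≤ i) (hin : i ≤ n) :
    coord (sStar i mu) i =
      if coord mu i + coord mu (i + 1) = 0 then coord mu (i + 1) - 1 else coord mu (i + 1) := by
  conv_lhs => unfold coord sStar
  rw [dif_pos ⟨hi, hin⟩, if_pos (by simp only; omega)]

lemma coord_sStar_succ (mu : Fin n → ℂ) {i : ℕ} (hi : 1 ≤ i) (hin : i + 1 ≤ n) :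
    coord (sStar i mu) (i + 1) =
      if coord mu i + coord mu (i + 1) = 0 then coord mu i + 1 else coord mu i := by
  conv_lhs => unfold coord sStar
  rw [dif_pos ⟨by omega, hin⟩, if_neg (by simp only; omega), if_pos (by simp only; omega)]

lemma sStar_eq_self (mu : Fin n → ℂ) {i : ℕ} (hi : 1 ≤ i) (hin : i + 1 ≤ n)
    (h : (coord mu i = coord mu (i + 1) ∧ coord mu i ≠ 0) ∨
      (coord mu i = -(1 / 2) ∧ coord mu (i + 1) = 1 / 2)) :
    sStar i mu = mu := by
  have hpair : (if coord mu i + coord mu (i + 1) = 0 then coord mu (i + 1) - 1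
        else coord mu (i + 1)) = coord mu i ∧
      (if coord mu i + coord mu (i + 1) = 0 then coord mu i + 1 else coord mu i) =
        coord mu (i + 1) := by
    rcases h with ⟨heq, hne⟩ | ⟨hi, hi'⟩
    · have hsum : coord mu i + coord mu (i + 1) ≠ 0 := by
        rw [← heq, ← two_mul]; exact mul_ne_zero two_ne_zero hne
      rw [if_neg hsum, if_neg hsum]; exact ⟨heq.symm, heq⟩
    · rw [hi, hi', if_pos (by norm_num)]; norm_num
  refine eq_of_coord_eq fun j hj hjn => ?_
  rcases eq_or_ne j i with rfl | hji
  · rw [coord_sStar_self mu hj hjn, hpair.1]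
  rcases eq_or_ne j (i + 1) with rfl | hji'
  · rw [coord_sStar_succ mu hi hjn, hpair.2]
  · exact coord_sStar_of_ne i mu hj hji hji'

/-- The state of `s_k ⋯ s_{m-1} * λ`: the entry `λ_m` has travelled to position `k`, decreasing by
one at each shift (`moving_*`), and behind it every entry `λ_j` (`k ≤ j < m`) sits at position
`j + 1`, possibly increased by one (`next` records this for `j = k`). -/
structure StarDescInvariant (lam : Fin n → ℂ) (m k : ℕ) (mu : Fin n → ℂ) : Prop where
  coord_eq : ∀ j, 1 ≤ j → j < k → coord mu j = coord lam j
  chain : ∀ i, k < i → i ≤ n - 1 → csucc (coord mu i) (coord mu (i + 1))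
  next : coord mu (k + 1) = coord lam k ∨
    (coord mu (k + 1) = coord lam k + 1 ∧ coord mu k + coord mu (k + 1) = 0 ∧ coord lam k ≠ 0)
  moving_ne_zero : coord mu k ≠ 0
  moving_add_nat : ∃ t : ℕ, coord lam m = coord mu k + t

lemma starDescInvariant_self (lam : Fin n → ℂ) {m : ℕ}
    (h1 : ∀ i, m < i → i ≤ n - 1 → csucc (coord lam i) (coord lam (i + 1)))
    (h2 : (coord lam m = coord lam (m + 1) ∧ coord lam m ≠ 0) ∨
      (coord lam m = -(1 / 2) ∧ coord lam (m + 1) = 1 / 2)) :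
    StarDescInvariant lam m m lam where
  coord_eq _ _ _ := rfl
  chain := h1
  next := by
    rcases h2 with ⟨heq, -⟩ | ⟨hm, hm'⟩
    · exact Or.inl heq.symm
    · exact Or.inr ⟨by rw [hm, hm']; norm_num, by rw [hm, hm']; norm_num, by rw [hm]; norm_num⟩
  moving_ne_zero := by
    rcases h2 with ⟨-, hne⟩ | ⟨hm, -⟩
    · exact hne
    · rw [hm]; norm_num
  moving_add_nat := ⟨0, by simp⟩

lemma StarDescInvariant.step {lam mu : Fin n → ℂ} {m k : ℕ}
    (hinv : StarDescInvariant lam m (k + 1) mu)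
    (hk : 1 ≤ k) (hkn : k + 1 < n) (hstep : csucc (coord lam k) (coord lam (k + 1)))
    (hkm : ∃ s : ℕ, coord lam k - coord lam m = s) :
    StarDescInvariant lam m k (sStar k mu) := by
  have hmuk : coord mu k = coord lam k := hinv.coord_eq k hk (by omega)
  have hself := coord_sStar_self mu hk (by omega)
  have hsucc := coord_sStar_succ mu hk (by omega)
  rw [hmuk] at hself hsucc
  obtain ⟨t, ht⟩ := hinv.moving_add_nat
  have hcoord : ∀ j, 1 ≤ j → j < k → coord (sStar k mu) j = coord lam j := fun j hj hjk => by
    rw [coord_sStar_of_ne k mu hj (by omega) (by omega)]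
    exact hinv.coord_eq j hj (by omega)
  have hchain : ∀ i, k < i → i ≤ n - 1 →
      csucc (coord (sStar k mu) i) (coord (sStar k mu) (i + 1)) := fun i hki hin => by
    rcases eq_or_lt_of_le (Nat.succ_le_of_lt hki) with rfl | hki'
    · rw [hsucc, coord_sStar_of_ne k mu (by omega) (by omega) (by omega)]
      exact csucc_sStar_entry hstep hinv.next
    · rw [coord_sStar_of_ne k mu (by omega) (by omega) (by omega),
        coord_sStar_of_ne k mu (by omega) (by omega) (by omega)]
      exact hinv.chain i hki' hin
  by_cases hshift : coord lam k + coord mu (k + 1) = 0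
  · rw [if_pos hshift] at hself hsucc
    have hlamk : coord lam k ≠ 0 := fun h0 =>
      hinv.moving_ne_zero (by linear_combination hshift - h0)
    have hmoving : coord mu (k + 1) - 1 ≠ 0 := by
      obtain ⟨s, hs⟩ := hkm
      intro h0
      have hnat : ((s + t + 2 : ℕ) : ℂ) = 0 := by
        push_cast; linear_combination -hs - ht + hshift - 2 * h0
      exact absurd (by exact_mod_cast hnat : s + t + 2 = 0) (by omega)
    refine ⟨hcoord, hchain, Or.inr ⟨hsucc, ?_, hlamk⟩, hself ▸ hmoving, ⟨t + 1, ?_⟩⟩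
    · rw [hself, hsucc]; linear_combination hshift
    · rw [hself]; push_cast; linear_combination ht
  · rw [if_neg hshift] at hself hsucc
    exact ⟨hcoord, hchain, Or.inl hsucc, hself ▸ hinv.moving_ne_zero, hself ▸ ⟨t, ht⟩⟩

lemma starDesc_of_lt (lam : Fin n → ℂ) {j k : ℕ} (h : k < j) : starDesc j k lam = lam := by
  simp [starDesc, Nat.sub_eq_zero_of_le (Nat.succ_le_of_lt h)]

lemma starDesc_eq_sStar (lam : Fin n → ℂ) {j k : ℕ} (h : j ≤ k) :
    starDesc j k lam = sStar j (starDesc (j + 1) k lam) := by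
  rw [starDesc, starDesc, show k + 1 - j = k + 1 - (j + 1) + 1 by omega, List.range'_succ]
  rfl

lemma starDesc_succ_right (lam : Fin n → ℂ) {j k : ℕ} (h : j ≤ k + 1) :
    starDesc j (k + 1) lam = starDesc j k (sStar (k + 1) lam) := by
  rw [starDesc, starDesc, show k + 1 + 1 - j = k + 1 - j + 1 by omega, List.range'_concat,
    List.foldr_append, show j + 1 * (k + 1 - j) = k + 1 by omega]
  rfl

lemma starDescInvariant_starDesc (lam : Fin n → ℂ) {m : ℕ} (hm1 : 1 ≤ m) (hm2 : m ≤ n - 1)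
    (h1 : ∀ i, 1 ≤ i → i ≤ n - 1 → i ≠ m → csucc (coord lam i) (coord lam (i + 1)))
    (h2 : (coord lam m = coord lam (m + 1) ∧ coord lam m ≠ 0) ∨
      (coord lam m = -(1 / 2) ∧ coord lam (m + 1) = 1 / 2)) :
    StarDescInvariant lam m 1 (starDesc 1 (m - 1) lam) := by
  refine Nat.decreasingInduction' (P := fun k => StarDescInvariant lam m k (starDesc k (m - 1) lam))
    (fun k hkm hk ih => ?_) hm1 ?_
  · rw [starDesc_eq_sStar lam (by omega)]
    refine ih.step hk (by omega) (h1 k hk (by omega) (by omega)) ?_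
    exact exists_nat_sub_of_csucc_chain (coord lam) hkm.le
      fun i hki him => h1 i (by omega) (by omega) (by omega)
  · rw [starDesc_of_lt lam (by omega)]
    exact starDescInvariant_self lam (fun i hmi hin => h1 i (by omega) hin (by omega)) h2

end StarAction

theorem stmt14_general (n : ℕ) (lam : Fin n → ℂ) (m : ℕ)
    (hm1 : 1 ≤ m) (hm2 : m ≤ n - 1)
    (h1 : ∀ i, 1 ≤ i → i ≤ n - 1 → i ≠ m → csucc (coord lam i) (coord lam (i + 1)))
    (h2 : (coord lam m = coord lam (m + 1) ∧ coord lam m ≠ 0) ∨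
          (coord lam m = -(1 / 2) ∧ coord lam (m + 1) = 1 / 2)) :
    starDesc 1 m lam = starDesc 1 (m - 1) lam ∧
    (∀ i, 2 ≤ i → i ≤ n - 1 →
      csucc (coord (starDesc 1 (m - 1) lam) i) (coord (starDesc 1 (m - 1) lam) (i + 1))) := by
  refine ⟨?_, fun i hi hin => (starDescInvariant_starDesc lam hm1 hm2 h1 h2).chain i hi hin⟩
  obtain ⟨k, rfl⟩ : ∃ k, m = k + 1 := ⟨m - 1, by omega⟩
  rw [starDesc_succ_right lam (by omega), sStar_eq_self lam hm1 (by omega) h2]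
  rfl

theorem stmt14 (n : ℕ) (hn : 2 ≤ n) (lam : Fin n → ℂ) (m : ℕ)
    (hm1 : 1 ≤ m) (hm2 : m ≤ n - 1)
    (h1 : ∀ i, 1 ≤ i → i ≤ n - 1 → i ≠ m → csucc (coord lam i) (coord lam (i + 1)))
    (h2 : (coord lam m = coord lam (m + 1) ∧ coord lam m ≠ 0) ∨
          (coord lam m = -(1 / 2) ∧ coord lam (m + 1) = 1 / 2)) :
    starDesc 1 m lam = starDesc 1 (m - 1) lam ∧
    (∀ i, 2 ≤ i → i ≤ n - 1 →
      csucc (coord (starDesc 1 (m - 1) lam) i) (coord (starDesc 1 (m - 1) lam) (i + 1))) :=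
  stmt14_general n lam m hm1 hm2 h1 h2
end
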